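/- Let Ω be a field and E a subfield of Ω. Let ℒ be the language of rings augmented by one unary predicate symbol, and regard Ω as an ℒ-structure in which the predicate is interpreted as E. Then for every subset A ⊆ Ω, the definable closure D = dcl_ℒ(A) is a subfield of Ω that is linearly disjoint from E over D ∩ E. -/

import Mathlib

/-!
STATEMENT 7: Let `Ω` be a field and `E` a subfield, and regard `Ω` as a structure for the
language of rings augmented by a unary predicate interpreted as `E`. Then for every
`A ⊆ Ω`, the definable closure `D = dcl_L(A)` is a subfield of `Ω` that is linearly
disjoint from `E` over `D ∩ E`.
-/

open FirstOrder FirstOrder.Ring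

/-- `v` is linearly independent over the subset `S` of `Ω`. -/
def LinIndepOver (Ω : Type*) [Field Ω] (S : Set Ω) {n : ℕ} (v : Fin n → Ω) : Prop :=
  ∀ c : Fin n → Ω, (∀ i, c i ∈ S) → (∑ i, c i * v i) = 0 → ∀ i, c i = 0

/-- `F` is linearly disjoint from `L` over `K` inside the ambient field `Ω`. -/
def LinDisjOver (Ω : Type*) [Field Ω] (K F L : Set Ω) : Prop :=
  ∀ (n : ℕ) (v : Fin n → Ω), (∀ i, v i ∈ F) →
    LinIndepOver Ω K v → LinIndepOver Ω L v

/-- The definable closure of `A` in the `L`-structure `M`: the set of `b` that are the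
unique solution of some `L`-formula with parameters from `A`. -/
def dcl (L : Language) (M : Type*) [L.Structure M] (A : Set M) : Set M :=
  {b | ∃ ψ : L.Formula (↥A ⊕ Fin 1),
    ψ.Realize (Sum.elim Subtype.val fun _ => b) ∧
    ∀ b' : M, ψ.Realize (Sum.elim Subtype.val fun _ => b') → b' = b}

/-- The language with a single unary predicate symbol and no function symbols. -/
def unaryPredLang : Language :=
  ⟨fun _ => Empty, fun n => match n with | 1 => PUnit | _ => Empty⟩

/-- The `unaryPredLang`-structure on `Ω` in which the predicate is interpreted as `E`. -/
def predStructure (Ω : Type*) (E : Set Ω) : unaryPredLang.Structure Ω where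
  funMap := fun f => f.elim
  RelMap := fun {n} r v =>
    match n, r, v with
    | 1, _, v => v 0 ∈ E

/-- The language of rings augmented by one unary predicate symbol. -/
def ringPredLang : Language := Language.ring.sum unaryPredLang

/-- The `ringPredLang`-structure on `Ω` in which the ring symbols are interpreted by the
field operations and the predicate is interpreted as `E`. -/
def ringPredStructure (Ω : Type*) [Language.ring.Structure Ω] (E : Set Ω) :
    ringPredLang.Structure Ω :=
  @Language.sumStructure _ _ _ _ (predStructure Ω E)

/-!
If `u` is a tuple from `dcl(A)` and `c` is the unique solution of a formula with parameters `u`,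
then `c ∈ dcl(A)`: quantify the parameters away, pinning each one down by its defining formula.
In particular `dcl(A)` is closed under the field operations. If a tuple `v` from `dcl(A)` is
linearly dependent over `E`, take an `E`-linear relation of minimal support, normalized to have
coefficient `1` at some index `k`. By minimality it is the only `E`-relation with that support and
`k`-th coefficient `1`, so each of its coefficients is defined by a formula with parameters `v`,
hence lies in `dcl(A) ∩ E`; thus `v` is already dependent over `dcl(A) ∩ E`.
-/

open FirstOrder.Language

section LinearAlgebra

variable {Ω : Type*} [Field Ω]

theorem exists_normalized_relation_unique {E : Subfield Ω} {n : ℕ} {v : Fin n → Ω}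
    (h : ¬ LinIndepOver Ω E v) :
    ∃ (d : Fin n → Ω) (k : Fin n), ∀ e : Fin n → Ω,
      ((∀ i, e i ∈ E) ∧ ∑ i, e i * v i = 0 ∧ e k = 1 ∧ ∀ i, d i = 0 → e i = 0) ↔ e = d := by
  classical
  simp only [LinIndepOver, SetLike.mem_coe, not_forall] at h
  obtain ⟨c, hcE, hc, i, hci⟩ := h
  let suppCard : (Fin n → Ω) → ℕ := fun d => (Finset.univ.filter fun i => d i ≠ 0).card
  obtain ⟨d₀, ⟨⟨hd₀E, hd₀⟩, hd₀_ne⟩, hmin⟩ := (measure suppCard).wf.has_min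
    {d | ((∀ i, d i ∈ E) ∧ ∑ i, d i * v i = 0) ∧ d ≠ 0}
    ⟨c, ⟨hcE, hc⟩, Function.ne_iff.2 ⟨i, hci⟩⟩
  obtain ⟨k, hk⟩ := Function.ne_iff.1 hd₀_ne
  refine ⟨fun i => (d₀ k)⁻¹ * d₀ i, k, fun e => ⟨fun ⟨heE, he, hek, hsupp⟩ => ?_, ?_⟩⟩
  swap
  · rintro rfl
    exact ⟨fun i => mul_mem (inv_mem (hd₀E k)) (hd₀E i),
      by simp only [mul_assoc, ← Finset.mul_sum, hd₀, mul_zero], inv_mul_cancel₀ hk,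
      fun _ h => h⟩
  -- otherwise the difference is a nonzero relation whose support misses `k`
  by_contra hne
  refine hmin (e - fun i => (d₀ k)⁻¹ * d₀ i)
    ⟨⟨fun i => sub_mem (heE i) (mul_mem (inv_mem (hd₀E k)) (hd₀E i)), ?_⟩, sub_ne_zero.2 hne⟩ ?_
  · simp only [Pi.sub_apply, sub_mul, Finset.sum_sub_distrib, he, mul_assoc, ← Finset.mul_sum,
      hd₀, mul_zero, sub_zero]
  · refine Finset.card_lt_card (Finset.ssubset_iff_of_subset ?_ |>.2 ⟨k, ?_, ?_⟩)
    · intro i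
      simp only [Finset.mem_filter, Finset.mem_univ, true_and, Pi.sub_apply]
      intro hi hd₀i
      simp [hd₀i, hsupp i (by simp [hd₀i])] at hi
    · simpa using hk
    · simp [hek, inv_mul_cancel₀ hk]

end LinearAlgebra

section Definability

variable {L : Language} {M : Type*} [L.Structure M] {A : Set M}

theorem mem_dcl_of_realize_iff {β : Type*} [Finite β] {v : β → M} (hv : ∀ j, v j ∈ dcl L M A)
    (θ : L.Formula (β ⊕ Fin 1)) {c : M}
    (hθ : ∀ x, θ.Realize (Sum.elim v fun _ => x) ↔ x = c) :
    c ∈ dcl L M A := by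
  choose ψ hψ hψ_unique using hv
  let Φ : L.Formula ((↥A ⊕ Fin 1) ⊕ β) :=
    (Formula.iInf fun j => (ψ j).relabel (Sum.elim (Sum.inl ∘ Sum.inl) fun _ => Sum.inr j)) ⊓
      θ.relabel (Sum.elim Sum.inr fun _ => Sum.inl (Sum.inr 0))
  have hw : ∀ w : β → M, (∀ j, (ψ j).Realize (Sum.elim Subtype.val fun _ => w j)) ↔ w = v :=
    fun w => ⟨fun h => funext fun j => hψ_unique j _ (h j), fun h => h ▸ hψ⟩
  have hΦ : ∀ x, (Φ.iExs β).Realize (Sum.elim Subtype.val fun _ => x) ↔ x = c := by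
    intro x
    simp only [Φ, Formula.realize_iExs, Formula.realize_inf, Formula.realize_iInf,
      Formula.realize_relabel, Sum.comp_elim]
    simp only [Function.comp_def, Sum.elim_inl, Sum.elim_inr, hw, exists_eq_left, hθ]
  exact ⟨Φ.iExs β, (hΦ c).2 rfl, fun x hx => (hΦ x).1 hx⟩

end Definability

section ExpansionOfField

open FirstOrder.Ring

variable {L : Language} {Ω : Type*} [Field Ω] [CompatibleRing Ω] [L.Structure Ω] {A : Set Ω}

theorem lift_mem_dcl (φ : Language.ring →ᴸ L) [φ.IsExpansionOn Ω] {β : Type*} [Finite β]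
    (p : FreeCommRing β) {w : β → Ω} (hw : ∀ j, w j ∈ dcl L Ω A) :
    FreeCommRing.lift w p ∈ dcl L Ω A :=
  mem_dcl_of_realize_iff hw
    (φ.onFormula ((Term.var (Sum.inr 0)).equal ((termOfFreeCommRing p).relabel Sum.inl)))
    fun x => by simp [LHom.realize_onFormula, Term.realize_relabel, Function.comp_def]

theorem inv_mem_dcl (φ : Language.ring →ᴸ L) [φ.IsExpansionOn Ω] {a : Ω}
    (ha : a ∈ dcl L Ω A) : a⁻¹ ∈ dcl L Ω A := by
  let x : Language.ring.Term (Fin 1 ⊕ Fin 1) := Term.var (Sum.inl 0)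
  let y : Language.ring.Term (Fin 1 ⊕ Fin 1) := Term.var (Sum.inr 0)
  -- `0⁻¹ = 0` in Lean, so the graph of inversion is `(x = 0 ∧ y = 0) ∨ x * y = 1`
  refine mem_dcl_of_realize_iff (v := fun _ => a) (fun _ => ha)
    (φ.onFormula ((x.equal 0 ⊓ y.equal 0) ⊔ (x * y).equal 1)) fun b => ?_
  simp only [LHom.realize_onFormula, Formula.realize_sup, Formula.realize_inf,
    Formula.realize_equal, realize_mul, realize_zero, realize_one, x, y, Term.realize_var,
    Sum.elim_inl, Sum.elim_inr]
  rcases eq_or_ne a 0 with rfl | ha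
  · simp
  · simpa [ha, eq_comm] using mul_eq_one_iff_inv_eq₀ ha

def dclSubfield (φ : Language.ring →ᴸ L) [φ.IsExpansionOn Ω] (A : Set Ω) : Subfield Ω where
  carrier := dcl L Ω A
  zero_mem' := by
    simpa using lift_mem_dcl φ (A := A) (0 : FreeCommRing Empty) (w := Empty.elim) nofun
  one_mem' := by
    simpa using lift_mem_dcl φ (A := A) (1 : FreeCommRing Empty) (w := Empty.elim) nofun
  add_mem' {a b} ha hb := by
    simpa using lift_mem_dcl φ (A := A) (.of 0 + .of 1 : FreeCommRing (Fin 2)) (w := ![a, b])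
      (Fin.forall_fin_two.2 ⟨ha, hb⟩)
  mul_mem' {a b} ha hb := by
    simpa using lift_mem_dcl φ (A := A) (.of 0 * .of 1 : FreeCommRing (Fin 2)) (w := ![a, b])
      (Fin.forall_fin_two.2 ⟨ha, hb⟩)
  neg_mem' {a} ha := by
    simpa using lift_mem_dcl φ (A := A) (-.of 0 : FreeCommRing (Fin 1)) (w := ![a])
      (Fin.forall_fin_one.2 ha)
  inv_mem' _ := inv_mem_dcl φ

theorem mem_dcl_of_unique_relation (φ : Language.ring →ᴸ L) [φ.IsExpansionOn Ω]
    {E : Set Ω} {P : L.Relations 1} (hP : ∀ x, Structure.RelMap P ![x] ↔ x ∈ E)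
    {n : ℕ} {v : Fin n → Ω} (hv : ∀ j, v j ∈ dcl L Ω A) {d : Fin n → Ω} {k : Fin n}
    (hd : ∀ e : Fin n → Ω, ((∀ i, e i ∈ E) ∧ ∑ i, e i * v i = 0 ∧ e k = 1 ∧
      ∀ i, d i = 0 → e i = 0) ↔ e = d) (i : Fin n) :
    d i ∈ dcl L Ω A := by
  let w : Fin n → Language.ring.Term ((Fin n ⊕ Fin 1) ⊕ Fin n) := fun j => Term.var (Sum.inr j)
  let x : Language.ring.Term ((Fin n ⊕ Fin 1) ⊕ Fin n) := Term.var (Sum.inl (Sum.inr 0))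
  let relation : Language.ring.Term ((Fin n ⊕ Fin 1) ⊕ Fin n) :=
    termOfFreeCommRing (∑ j, .of (Sum.inr j) * .of (Sum.inl (Sum.inl j)))
  let θ : L.Formula ((Fin n ⊕ Fin 1) ⊕ Fin n) :=
    φ.onFormula (x.equal (w i)) ⊓ ((Formula.iInf fun j => P.formula₁ (Term.var (Sum.inr j))) ⊓
      φ.onFormula (relation.equal 0 ⊓ (w k).equal 1 ⊓
        Formula.iInf fun j : {j // d j = 0} => (w j).equal 0))
  refine mem_dcl_of_realize_iff hv (θ.iExs (Fin n)) fun y => ?_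
  simp [θ, LHom.realize_onFormula, hP, relation, w, x, and_assoc, hd]

theorem linDisjOver_dcl (φ : Language.ring →ᴸ L) [φ.IsExpansionOn Ω] {E : Subfield Ω}
    {P : L.Relations 1} (hP : ∀ x, Structure.RelMap P ![x] ↔ x ∈ E) :
    LinDisjOver Ω (dcl L Ω A ∩ E) (dcl L Ω A) E := by
  intro n v hv hindep
  by_contra hdep
  obtain ⟨d, k, hd⟩ := exists_normalized_relation_unique hdep
  obtain ⟨hdE, hd_rel, hdk, -⟩ := (hd d).2 rfl
  have hd_dcl : ∀ i, d i ∈ dcl L Ω A := mem_dcl_of_unique_relation φ hP hv hd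
  exact one_ne_zero (hdk ▸ hindep d (fun i => ⟨hd_dcl i, hdE i⟩) hd_rel k)

end ExpansionOfField

theorem dcl_pair_isSubfield_linearlyDisjoint
    (Ω : Type*) [Field Ω] [CompatibleRing Ω] (E : Subfield Ω) (A : Set Ω) :
    ∃ D : Subfield Ω,
      (D : Set Ω) = @dcl ringPredLang Ω (ringPredStructure Ω (E : Set Ω)) A ∧
      LinDisjOver Ω ((D : Set Ω) ∩ (E : Set Ω)) (D : Set Ω) (E : Set Ω) := by
  let _ : unaryPredLang.Structure Ω := predStructure Ω (E : Set Ω)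
  exact ⟨dclSubfield (LHom.sumInl (L' := unaryPredLang)) A, rfl,
    linDisjOver_dcl LHom.sumInl (P := Sum.inr PUnit.unit) fun _ => Iff.rfl⟩
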